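/- arXiv:1403.4883 — 7 statements merged into one kernel-verified Lean document; each statement's English description precedes it below -/
import Mathlib

section
/- Let B be a commutative group, θ : B → C a surjective group homomorphism whose kernel A is finite of exponent dividing n (i.e. n·a = 0 for all a ∈ A). Then there exists a group homomorphism φ : C → B such that φ ∘ θ equals multiplication by n on B, and consequently θ ∘ φ equals multiplication by n on C. -/
/-- If `θ : B → C` is a surjective homomorphism of abelian groups whose kernel is finite
of exponent dividing `n`, then `θ` admits a quasi-section `φ` with `φ ∘ θ = [n]` on `B`
and consequently `θ ∘ φ = [n]` on `C`. -/
theorem stmt1 {B C : Type*} [AddCommGroup B] [AddCommGroup C]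
    (θ : B →+ C) (hsurj : Function.Surjective θ)
    (n : ℕ) (hn : 0 < n)
    (hfin : Finite θ.ker)
    (hexp : ∀ a ∈ θ.ker, n • a = 0) :
    ∃ φ : C →+ B, (∀ b : B, φ (θ b) = n • b) ∧ (∀ c : C, θ (φ c) = n • c) := by
  let e := QuotientAddGroup.quotientKerEquivOfSurjective θ hsurj
  let f : B ⧸ θ.ker →+ B :=
    QuotientAddGroup.lift θ.ker (n • AddMonoidHom.id B)
      (fun a ha => by simpa using hexp a ha)
  refine ⟨f.comp e.symm.toAddMonoidHom, ?_, ?_⟩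
  · intro b
    have he : e.symm (θ b) = QuotientAddGroup.mk b := by
      apply e.injective
      simp [e, QuotientAddGroup.quotientKerEquivOfSurjective]
      exact hsurj.hasRightInverse.choose_spec _
    simp [he, f]
  · intro c
    obtain ⟨b, rfl⟩ := hsurj c
    have he : e.symm (θ b) = QuotientAddGroup.mk b := by
      apply e.injective
      simp [e, QuotientAddGroup.quotientKerEquivOfSurjective]
      exact hsurj.hasRightInverse.choose_spec _
    simp [he, f]
end

section
/- Let 0 → A → B → C → 0 be a short exact sequence of commutative groups each of which is divisible-by-finite (the divisible hull has finite index). Then the induced sequence 0 → Â → B̂ → Ĉ → 0 of inverse limits along multiplication maps is exact; in particular the induced map B̂ → Ĉ is surjective. -/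
/-! The tower `G ← G ← G ← ⋯` along the cofinal chain `0! ∣ 1! ∣ 2! ∣ ⋯`, with transition maps
`[k + 1]`, already computes `Ĝ`. To lift a tower `z` from `C` to `B`, lift each `z k` to some
`u k`; the defects `(k + 1) • u (k + 1) - u k` are `f (a k)`, and correcting by `f (α k)` works
as soon as `α k = a k + (k + 1) • α (k + 1)`. This recursion has no reason to be solvable in `A`,
but `Ĉ` is divisible, so it suffices to lift `q • c` for `q = [A : A°]`. The defects are
then multiples of `q`, hence lie in the divisible group `A°`, where the recursion is solved
forwards by choosing `α (k + 1)` as a `(k + 1)`-th part of `α k - a k`. -/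

/-- The inverse limit `Ĝ = lim← (G, [m])`: coherent families `(g_n)_{n : ℕ+}`
with `m • g_{n*m} = g_n`, as a subgroup of the product. -/
def Coherent (G : Type*) [AddCommGroup G] : AddSubgroup (ℕ+ → G) where
  carrier := {g | ∀ n m : ℕ+, (m : ℕ) • g (n * m) = g n}
  zero_mem' := by intro n m; simp
  add_mem' := by
    intro a b ha hb n m
    simp only [Pi.add_apply, smul_add, ha n m, hb n m]
  neg_mem' := by
    intro a ha n m
    simp only [Pi.neg_apply, smul_neg, ha n m]


/-- Multiplication by `n` as an additive group homomorphism. -/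
def nsmulHom (G : Type*) [AddCommGroup G] (n : ℕ) : G →+ G where
  toFun x := n • x
  map_zero' := smul_zero n
  map_add' a b := smul_add n a b

/-- `G` is divisible-by-finite: the divisible hull `G° = ⋂_{n≥1} nG`
has finite index in `G`. -/
def DivisibleByFinite (G : Type*) [AddCommGroup G] : Prop :=
  (⨅ n : ℕ+, (nsmulHom G (n : ℕ)).range).FiniteIndex

/-- The functorially induced map `Ĝ → Ĥ` on inverse limits. -/
def hatMap {A B : Type*} [AddCommGroup A] [AddCommGroup B] (f : A →+ B) :
    Coherent A →+ Coherent B where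
  toFun x := ⟨fun n => f (x.1 n), fun n m => by rw [← map_nsmul, x.2 n m]⟩
  map_zero' := by
    apply Subtype.ext; funext n
    simp
  map_add' a b := by
    apply Subtype.ext; funext n
    simp

open Nat

-- `x k` sits at level `k !` of the tower.
def IsFactorialChain {G : Type*} [AddCommGroup G] (x : ℕ → G) : Prop :=
  ∀ k : ℕ, (k + 1) • x (k + 1) = x k

namespace IsFactorialChain

variable {G H : Type*} [AddCommGroup G] [AddCommGroup H] {x : ℕ → G}

theorem map (hx : IsFactorialChain x) (f : G →+ H) : IsFactorialChain (f ∘ x) := fun k => by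
  simp only [Function.comp_apply, ← map_nsmul, hx k]

theorem ascFactorial_nsmul (hx : IsFactorialChain x) (j : ℕ) :
    ∀ d, (j + 1).ascFactorial d • x (j + d) = x j
  | 0 => by simp
  | d + 1 => by
    rw [Nat.ascFactorial_succ, mul_comm, ← smul_smul, ← add_assoc,
      show j + 1 + d = j + d + 1 by ring, hx, ascFactorial_nsmul hx j d]

theorem factorial_pred_coherent (hx : IsFactorialChain x) (n m : ℕ+) :
    (m : ℕ) • (((n * m : ℕ+) : ℕ) - 1)! • x (n * m : ℕ+) = ((n : ℕ) - 1)! • x n := by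
  obtain ⟨d, hd⟩ : ∃ d, ((n * m : ℕ+) : ℕ) = n + d :=
    Nat.exists_eq_add_of_le (by simpa using Nat.le_mul_of_pos_right (n : ℕ) m.pos)
  have key :
      (m : ℕ) * (((n * m : ℕ+) : ℕ) - 1)! = ((n : ℕ) - 1)! * (n + 1 : ℕ).ascFactorial d := by
    apply Nat.eq_of_mul_eq_mul_left n.pos
    have h1 := Nat.mul_factorial_pred (n * m).ne_zero
    have h2 := Nat.mul_factorial_pred n.ne_zero
    have h3 := Nat.factorial_mul_ascFactorial n d
    simp only [PNat.mul_coe] at hd h1 h2 ⊢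
    calc (n : ℕ) * (m * ((n * m : ℕ) - 1)!) = (n * m : ℕ) * ((n * m : ℕ) - 1)! := by ring
      _ = (n : ℕ) * ((n : ℕ) - 1)! * (n + 1 : ℕ).ascFactorial d := by rw [h1, hd, ← h3, h2]
      _ = _ := by ring
  rw [smul_smul, key, ← smul_smul, hd, hx.ascFactorial_nsmul]

end IsFactorialChain

namespace Coherent

variable {G H : Type*} [AddCommGroup G] [AddCommGroup H]

def factorialPNat (k : ℕ) : ℕ+ := ⟨k !, k.factorial_pos⟩

@[simp]
theorem coe_factorialPNat (k : ℕ) : (factorialPNat k : ℕ) = k ! := rfl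

theorem factorialPNat_succ (k : ℕ) : factorialPNat (k + 1) = factorialPNat k * k.succPNat :=
  PNat.eq (by rw [PNat.mul_coe, coe_factorialPNat, coe_factorialPNat, Nat.succPNat_coe,
    Nat.factorial_succ, mul_comm])

def atFactorial (c : Coherent G) (k : ℕ) : G := c.1 (factorialPNat k)

theorem isFactorialChain_atFactorial (c : Coherent G) : IsFactorialChain (atFactorial c) := by
  intro k
  simpa only [atFactorial, factorialPNat_succ, Nat.succPNat_coe] using
    c.2 (factorialPNat k) k.succPNat

-- `x n` sits at level `n ! = n * (n - 1)!`.
def ofFactorialChain (x : ℕ → G) (hx : IsFactorialChain x) : Coherent G :=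
  ⟨fun n => ((n : ℕ) - 1)! • x n, hx.factorial_pred_coherent⟩

theorem ofFactorialChain_eq (c : Coherent G) {x : ℕ → G} (hx : IsFactorialChain x)
    (h : ∀ k, x k = atFactorial c k) : ofFactorialChain x hx = c := by
  refine Subtype.ext (funext fun n => ?_)
  have hn : n * factorialPNat ((n : ℕ) - 1) = factorialPNat n :=
    PNat.eq (Nat.mul_factorial_pred n.ne_zero)
  simpa only [ofFactorialChain, h, atFactorial, hn, coe_factorialPNat] using
    c.2 n (factorialPNat ((n : ℕ) - 1))

theorem hatMap_ofFactorialChain (f : G →+ H) {x : ℕ → G} (hx : IsFactorialChain x) :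
    hatMap f (ofFactorialChain x hx) = ofFactorialChain (f ∘ x) (hx.map f) :=
  Subtype.ext (funext fun _ => map_nsmul f _ _)

theorem exists_nsmul_eq (c : Coherent G) (q : ℕ+) : ∃ c' : Coherent G, (q : ℕ) • c' = c :=
  ⟨⟨fun n => c.1 (n * q), fun n m => by
    simp only [mul_right_comm n m q]; exact c.2 _ _⟩,
    Subtype.ext (funext fun n => c.2 n q)⟩

end Coherent

theorem hatMap_injective {A B : Type*} [AddCommGroup A] [AddCommGroup B] {f : A →+ B}
    (hf : Function.Injective f) : Function.Injective (hatMap f) :=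
  fun _ _ h => Subtype.ext (funext fun n => hf (congrFun (congrArg Subtype.val h) n))

theorem hatMap_exact {A B C : Type*} [AddCommGroup A] [AddCommGroup B] [AddCommGroup C]
    {f : A →+ B} {g : B →+ C} (hf : Function.Injective f) (hfg : Function.Exact f g) :
    Function.Exact (hatMap f) (hatMap g) := by
  intro y
  constructor
  · intro hy
    choose a ha using fun n => (hfg (y.1 n)).mp (congrFun (congrArg Subtype.val hy) n)
    have ha_coherent : a ∈ Coherent A := fun n m => hf (by rw [map_nsmul, ha, ha]; exact y.2 n m)
    exact ⟨⟨a, ha_coherent⟩, Subtype.ext (funext ha)⟩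
  · rintro ⟨x, rfl⟩
    exact Subtype.ext (funext fun n => hfg.apply_apply_eq_zero (x.1 n))

def divHull (A : Type*) [AddCommGroup A] : AddSubgroup A :=
  ⨅ n : ℕ+, (nsmulHom A n).range

section DivHull

variable {A : Type*} [AddCommGroup A]

theorem mem_divHull {x : A} : x ∈ divHull A ↔ ∀ n : ℕ, 0 < n → ∃ y, n • y = x := by
  simp only [divHull, AddSubgroup.mem_iInf, AddMonoidHom.mem_range, nsmulHom,
    AddMonoidHom.coe_mk, ZeroHom.coe_mk]
  exact ⟨fun h n hn => h ⟨n, hn⟩, fun h n => h n n.pos⟩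

theorem DivisibleByFinite.index_ne_zero (hA : DivisibleByFinite A) : (divHull A).index ≠ 0 :=
  AddSubgroup.FiniteIndex.index_ne_zero (self := hA)

-- `(divHull A).index` kills `A ⧸ divHull A`, so it multiplies `A` into `divHull A`.
theorem DivisibleByFinite.surjective_nsmul_divHull (hA : DivisibleByFinite A) {n : ℕ}
    (hn : n ≠ 0) : Function.Surjective fun y : divHull A => n • y := by
  rintro ⟨x, hx⟩
  obtain ⟨z, hz⟩ := mem_divHull.mp hx (n * (divHull A).index)
    (Nat.mul_pos (Nat.pos_of_ne_zero hn) (Nat.pos_of_ne_zero hA.index_ne_zero))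
  exact ⟨⟨(divHull A).index • z, (divHull A).nsmul_index_mem z⟩, Subtype.ext ((smul_smul _ _ z).trans hz)⟩

end DivHull

theorem DivisibleBy.exists_eq_add_succ_nsmul {D : Type*} [AddCommGroup D] [DivisibleBy D ℕ]
    (s : ℕ → D) : ∃ x : ℕ → D, ∀ k, x k = s k + (k + 1) • x (k + 1) := by
  let x : ℕ → D := fun k => Nat.rec 0 (fun k xk => DivisibleBy.div (xk - s k) (k + 1)) k
  refine ⟨x, fun k => ?_⟩
  rw [show x (k + 1) = DivisibleBy.div (x k - s k) (k + 1) from rfl,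
    DivisibleBy.div_cancel _ k.succ_ne_zero, add_sub_cancel]

theorem IsFactorialChain.exists_lift_index_nsmul {A B C : Type*} [AddCommGroup A]
    [AddCommGroup B] [AddCommGroup C] {f : A →+ B} {g : B →+ C} (hg : Function.Surjective g)
    (hfg : Function.Exact f g) (hA : DivisibleByFinite A) {z : ℕ → C}
    (hz : IsFactorialChain z) :
    ∃ y : ℕ → B, IsFactorialChain y ∧ ∀ k, g (y k) = (divHull A).index • z k := by
  set q := (divHull A).index
  choose u hu using fun k => hg (z k)
  choose a ha using fun k => (hfg ((k + 1) • u (k + 1) - u k)).mp <| by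
    rw [map_sub, map_nsmul, hu, hu, hz, sub_self]
  let := divisibleByOfSMulRightSurj (divHull A) ℕ hA.surjective_nsmul_divHull
  obtain ⟨α, hα⟩ := DivisibleBy.exists_eq_add_succ_nsmul fun k =>
    (⟨q • a k, (divHull A).nsmul_index_mem _⟩ : divHull A)
  have hα' (k : ℕ) : (α k : A) = q • a k + (k + 1) • (α (k + 1) : A) :=
    congrArg Subtype.val (hα k)
  refine ⟨fun k => q • u k + f (α k), fun k => ?_, fun k => ?_⟩
  · dsimp only
    rw [hα' k, map_add, map_nsmul, ha]
    simp only [smul_add, smul_sub, map_nsmul]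
    rw [smul_comm]
    abel
  · simp [hu, hfg.apply_apply_eq_zero]

theorem hatMap_surjective {A B C : Type*} [AddCommGroup A] [AddCommGroup B] [AddCommGroup C]
    {f : A →+ B} {g : B →+ C} (hg : Function.Surjective g) (hfg : Function.Exact f g)
    (hA : DivisibleByFinite A) : Function.Surjective (hatMap g) := by
  intro c
  obtain ⟨c', rfl⟩ := Coherent.exists_nsmul_eq c ⟨_, Nat.pos_of_ne_zero hA.index_ne_zero⟩
  obtain ⟨y, hy, hgy⟩ :=
    (Coherent.isFactorialChain_atFactorial c').exists_lift_index_nsmul hg hfg hA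
  refine ⟨Coherent.ofFactorialChain y hy, ?_⟩
  rw [Coherent.hatMap_ofFactorialChain]
  exact Coherent.ofFactorialChain_eq _ _ fun k => hgy k

theorem stmt4_general {A B C : Type*} [AddCommGroup A] [AddCommGroup B] [AddCommGroup C]
    (f : A →+ B) (g : B →+ C)
    (hf : Function.Injective f) (hg : Function.Surjective g)
    (hfg : Function.Exact f g)
    (hA : DivisibleByFinite A) :
    Function.Injective (hatMap f) ∧ Function.Exact (hatMap f) (hatMap g) ∧
      Function.Surjective (hatMap g) :=
  ⟨hatMap_injective hf, hatMap_exact hf hfg, hatMap_surjective hg hfg hA⟩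

/-- Exactness of `0 → Â → B̂ → Ĉ → 0` induced by a short exact sequence of
divisible-by-finite abelian groups. -/
theorem stmt4 {A B C : Type*} [AddCommGroup A] [AddCommGroup B] [AddCommGroup C]
    (f : A →+ B) (g : B →+ C)
    (hf : Function.Injective f) (hg : Function.Surjective g)
    (hfg : Function.Exact f g)
    (hA : DivisibleByFinite A) (hB : DivisibleByFinite B) (hC : DivisibleByFinite C) :
    Function.Injective (hatMap f) ∧ Function.Exact (hatMap f) (hatMap g) ∧
      Function.Surjective (hatMap g) :=
  stmt4_general f g hf hg hfg hA
end

section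
/- Let A and A' be abelian subgroups (divisible) of a divisible abelian group G such that the summation map Σ : A × A' → G is surjective with finite kernel, and suppose there is a homomorphism θ : G → A × A' with θ ∘ Σ = multiplication by m on A × A'. Let π₂ : A × A' → A' be the projection. Then the divisible hull (connected component) of ker(π₂ ∘ θ : G → A') equals A; i.e., ⋂_n n·(ker(π₂∘θ)) = A. -/
/-- If the summation map `Σ : A × A' → G` is a surjection with finite kernel,
`θ : G → A × A'` satisfies `θ ∘ Σ = [m]`, and `π₂ : A × A' → A'` is the projection,
then the divisible hull of `ker(π₂ ∘ θ)` equals `A`. -/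
theorem stmt12 {G : Type*} [AddCommGroup G] (A A' : AddSubgroup G)
    (hAdiv : ∀ a ∈ A, ∀ n : ℕ, 0 < n → ∃ b ∈ A, n • b = a)
    (hA'div : ∀ a ∈ A', ∀ n : ℕ, 0 < n → ∃ b ∈ A', n • b = a)
    (hSsurj : ∀ g : G, ∃ a ∈ A, ∃ a' ∈ A', a + a' = g)
    (hSker : Finite {p : A × A' // (p.1 : G) + (p.2 : G) = 0})
    (m : ℕ) (hm : 0 < m)
    (θ : G →+ A × A')
    (hθ : ∀ (a : A) (a' : A'), θ ((a : G) + (a' : G)) = m • (a, a'))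
    (hA'm : Finite {x : A' // m • x = 0}) :
    (⨅ n : ℕ+, AddSubgroup.map (nsmulHom G (n : ℕ))
        ((AddMonoidHom.snd A A').comp θ).ker) = A := by
  apply le_antisymm
  · intro g hg
    have hg' : g ∈ AddSubgroup.map (nsmulHom G m)
        ((AddMonoidHom.snd A A').comp θ).ker :=
      AddSubgroup.mem_iInf.mp hg ⟨m, hm⟩
    obtain ⟨h, hk, hh⟩ := hg'
    obtain ⟨a, ha, a', ha', hsum⟩ := hSsurj h
    have hθh : θ h = m • ((⟨a, ha⟩ : A), (⟨a', ha'⟩ : A')) := by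
      rw [← hsum]; exact hθ ⟨a, ha⟩ ⟨a', ha'⟩
    have hker : ((AddMonoidHom.snd A A').comp θ) h = 0 := hk
    have h2 : m • (⟨a', ha'⟩ : A') = 0 := by
      have := hker
      simp only [AddMonoidHom.comp_apply] at this
      rw [hθh] at this
      simpa using this
    have h2' : m • a' = 0 := by
      have := congrArg (Subtype.val) h2
      simpa using this
    have : g = m • a := by
      rw [← hh, ← hsum]
      show m • (a + a') = m • a
      rw [smul_add, h2', add_zero]
    rw [this]
    exact A.nsmul_mem ha m
  · apply le_iInf
    intro n
    intro a ha
    obtain ⟨b, hb, hba⟩ := hAdiv a ha n n.pos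
    refine ⟨b, ?_, hba⟩
    have hθb : θ b = m • ((⟨b, hb⟩ : A), (0 : A')) := by
      have := hθ ⟨b, hb⟩ 0
      simpa using this
    show ((AddMonoidHom.snd A A').comp θ) b = 0
    simp only [AddMonoidHom.comp_apply, hθb]
    simp
end

section
/- Let V be a ℚ-vector space, ρ : V → G a surjective homomorphism onto an abelian group G with finitely generated kernel Λ. Suppose D₁, D₂ ≤ V are ℚ-subspaces with D₁ + Λ = D₂ + Λ. Then D₁ = D₂. -/
/-- A submodule contained in a f.g. submodule over a Noetherian ring is f.g. -/
private lemma fg_of_le_fg {R M : Type*} [CommRing R] [IsNoetherianRing R] [AddCommGroup M]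
    [Module R M] {N P : Submodule R M} (hN : N.FG) (hPN : P ≤ N) : P.FG := by
  haveI : IsNoetherian R N := isNoetherian_of_fg_of_noetherian N hN
  have h1 : (Submodule.comap N.subtype P).FG := IsNoetherian.noetherian _
  have h2 := h1.map N.subtype
  rwa [Submodule.map_comap_subtype, inf_eq_right.mpr hPN] at h2

/-- In a `ℚ`-vector space, if all rational multiples of `x` lie in a finitely generated
additive subgroup, then `x = 0`. -/
private lemma eq_zero_of_forall_smul_mem {Q : Type*} [AddCommGroup Q] [Module ℚ Q]
    {A : AddSubgroup Q} (hA : A.FG) {x : Q} (hx : ∀ q : ℚ, q • x ∈ A) : x = 0 := by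
  by_contra hx0
  -- The integer submodule generated by A is f.g.
  obtain ⟨S, hS⟩ := hA
  have hM : (AddSubgroup.toIntSubmodule A).FG := by
    refine ⟨S, ?_⟩
    apply_fun Submodule.toAddSubgroup using (fun a b hab => by
      simpa using congrArg AddSubgroup.toIntSubmodule hab)
    rw [Submodule.span_int_eq_addSubgroupClosure, hS,
      AddSubgroup.toIntSubmodule_toAddSubgroup]
  -- B : the ℚ-line through x, as a ℤ-submodule
  set B : Submodule ℤ Q := (Submodule.span ℚ {x}).restrictScalars ℤ with hBdef
  have hBM : B ≤ AddSubgroup.toIntSubmodule A := by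
    intro y hy
    rw [hBdef, Submodule.restrictScalars_mem, Submodule.mem_span_singleton] at hy
    obtain ⟨q, rfl⟩ := hy
    exact hx q
  have hB : B.FG := fg_of_le_fg hM hBM
  obtain ⟨T, hT⟩ := hB
  -- for each t ∈ T choose a rational q with t = q • x
  have hTq : ∀ t ∈ T, ∃ q : ℚ, q • x = t := by
    intro t ht
    have : t ∈ B := hT ▸ Submodule.subset_span ht
    rw [hBdef, Submodule.restrictScalars_mem, Submodule.mem_span_singleton] at this
    exact this
  choose qf hqf using hTq
  -- n = product of denominators
  set n : ℕ := ∏ t ∈ T.attach, (qf t.1 t.2).den with hn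
  have hnpos : 0 < n := Finset.prod_pos (fun t _ => (qf t.1 t.2).pos)
  -- the submodule C of elements y with n • y ∈ ℤ • x
  set C : Submodule ℤ Q :=
    { carrier := {y | (n : ℚ) • y ∈ Submodule.span ℤ ({x} : Set Q)}
      add_mem' := fun ha hb => by simpa [smul_add] using add_mem ha hb
      zero_mem' := by simp
      smul_mem' := fun c y hy => by
        have : (n : ℚ) • c • y = c • ((n : ℚ) • y) := smul_comm _ _ _
        simpa [this] using Submodule.smul_mem _ c hy } with hC
  have hBC : B ≤ C := by
    rw [← hT, Submodule.span_le]
    intro t ht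
    set q := qf t ht with hqdef
    have hq : q • x = t := hqf t ht
    have hden : ((q.den : ℤ)) ∣ (n : ℤ) := by
      exact_mod_cast Finset.dvd_prod_of_mem (fun s => (qf s.1 s.2).den)
        (Finset.mem_attach T ⟨t, ht⟩)
    obtain ⟨k, hk⟩ := hden
    show (n : ℚ) • t ∈ Submodule.span ℤ ({x} : Set Q)
    have : (n : ℚ) • t = (q.num * k) • x := by
      rw [← hq, smul_smul]
      have h1 : (n : ℚ) = (q.den : ℚ) * (k : ℚ) := by exact_mod_cast hk
      have h2 : (q.den : ℚ) * q = (q.num : ℚ) := by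
        rw [mul_comm]; exact_mod_cast q.mul_den_eq_num
      push_cast
      rw [h1, mul_comm (q.den : ℚ) (k : ℚ), mul_assoc, h2, ← Int.cast_smul_eq_zsmul ℚ]
      push_cast
      ring_nf
    rw [this]
    exact Submodule.smul_mem _ _ (Submodule.mem_span_singleton_self x)
  -- now derive a contradiction using y = (1/(2n)) • x
  have hy : ((1 / (2 * n) : ℚ)) • x ∈ B := by
    rw [hBdef, Submodule.restrictScalars_mem]
    exact Submodule.smul_mem _ _ (Submodule.mem_span_singleton_self x)
  have := hBC hy
  rw [hC] at this
  have hmem : (n : ℚ) • (1 / (2 * n) : ℚ) • x ∈ Submodule.span ℤ ({x} : Set Q) := this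
  rw [Submodule.mem_span_singleton] at hmem
  obtain ⟨m, hm⟩ := hmem
  have hne : (n : ℚ) ≠ 0 := by exact_mod_cast hnpos.ne'
  have hhalf : ((1 : ℚ) / 2) • x = (m : ℚ) • x := by
    have h1 : ((n : ℚ)) * (1 / (2 * n)) = 1 / 2 := by field_simp
    calc ((1 : ℚ) / 2) • x = ((n : ℚ) * (1 / (2 * n))) • x := by rw [h1]
    _ = (n : ℚ) • (1 / (2 * (n : ℚ))) • x := by rw [mul_smul]
    _ = m • x := hm.symm
    _ = (m : ℚ) • x := (Int.cast_smul_eq_zsmul ℚ m x).symm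
  have : ((1 : ℚ) / 2 - m) • x = 0 := by rw [sub_smul, hhalf, sub_self]
  rcases smul_eq_zero.mp this with hq | hx'
  · have : (1 : ℚ) / 2 = m := by linarith [sub_eq_zero.mp hq]
    have : (2 : ℚ) * m = 1 := by linarith
    have : (2 * m : ℤ) = 1 := by exact_mod_cast this
    omega
  · exact hx0 hx'

private lemma le_of_le_sup_ker {V G : Type*} [AddCommGroup V] [Module ℚ V] [AddCommGroup G]
    (ρ : V →+ G) (hker : ρ.ker.FG) (D₁ D₂ : Submodule ℚ V)
    (h : D₁.toAddSubgroup ≤ D₂.toAddSubgroup ⊔ ρ.ker) : D₁ ≤ D₂ := by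
  intro x hxD
  set π := D₂.mkQ
  set A : AddSubgroup (V ⧸ D₂) := AddSubgroup.map π.toAddMonoidHom ρ.ker with hA
  have hAfg : A.FG := by
    classical
    obtain ⟨S, hS⟩ := hker
    exact ⟨S.image π.toAddMonoidHom, by
      rw [Finset.coe_image, ← AddMonoidHom.map_closure, hS, hA]⟩
  have hx : ∀ q : ℚ, q • π x ∈ A := by
    intro q
    have hqx : q • x ∈ D₁.toAddSubgroup := D₁.smul_mem q hxD
    have := h hqx
    rw [AddSubgroup.mem_sup] at this
    obtain ⟨d, hd, l, hl, hdl⟩ := this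
    have : q • π x = π l := by
      rw [← map_smul, ← hdl, map_add]
      have : π d = 0 := by
        rw [Submodule.mkQ_apply, Submodule.Quotient.mk_eq_zero]
        exact hd
      rw [this, zero_add]
    rw [this]
    exact ⟨l, hl, rfl⟩
  have := eq_zero_of_forall_smul_mem hAfg hx
  rwa [Submodule.mkQ_apply, Submodule.Quotient.mk_eq_zero] at this

/-- If `Λ = ker ρ` is finitely generated and `D₁, D₂` are `ℚ`-subspaces of a `ℚ`-vector
space `V` with `D₁ + Λ = D₂ + Λ`, then `D₁ = D₂`. -/
theorem stmt14 {V G : Type*} [AddCommGroup V] [Module ℚ V] [AddCommGroup G]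
    (ρ : V →+ G) (hsurj : Function.Surjective ρ)
    (hker : ρ.ker.FG)
    (D₁ D₂ : Submodule ℚ V)
    (h : D₁.toAddSubgroup ⊔ ρ.ker = D₂.toAddSubgroup ⊔ ρ.ker) :
    D₁ = D₂ := by
  refine le_antisymm ?_ ?_
  · exact le_of_le_sup_ker ρ hker D₁ D₂ (h ▸ le_sup_left)
  · exact le_of_le_sup_ker ρ hker D₂ D₁ (h ▸ le_sup_left)
end

section
/- (Sah's lemma) Let Γ be a group acting on an abelian group M (i.e., M is a Γ-module), and suppose there exists σ in the center of Γ such that the endomorphism m ↦ σ·m − m of M is bijective. Then the first cohomology group H¹(Γ, M) vanishes. -/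
/-- Sah's lemma: if `σ` is central in `Γ` and `m ↦ σ • m - m` is bijective on the
`Γ`-module `M`, then `H¹(Γ, M) = 0`: every crossed homomorphism is principal. -/
theorem stmt16 {Γ M : Type*} [Group Γ] [AddCommGroup M] [DistribMulAction Γ M]
    (σ : Γ) (hσ : σ ∈ Subgroup.center Γ)
    (hbij : Function.Bijective (fun m : M => σ • m - m)) :
    ∀ f : Γ → M, (∀ g h : Γ, f (g * h) = f g + g • f h) →
      ∃ m : M, ∀ g : Γ, f g = g • m - m := by
  intro f hc
  obtain ⟨m, hm⟩ := hbij.2 (f σ)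
  simp only at hm
  refine ⟨m, fun g => ?_⟩
  have hcomm : g * σ = σ * g := Subgroup.mem_center_iff.mp hσ g
  have key : f g + g • f σ = f σ + σ • f g := by
    rw [← hc, ← hc, hcomm]
  apply hbij.1
  simp only
  rw [← hm] at key
  have hgs : g • σ • m = σ • g • m := by
    rw [← mul_smul, ← mul_smul, hcomm]
  rw [smul_sub] at key ⊢
  rw [hgs] at key
  abel_nf
  abel_nf at key
  linear_combination (norm := abel) -key
end

section
/- Let G be an abelian group, let ρ : Ĝ → G be the first projection from the inverse limit along multiplication maps, and let H ≤ G be a divisible subgroup. Then ρ⁻¹(H) = Ĥ' + ker ρ, where Ĥ' := { x ∈ Ĝ : ρ_n(x) ∈ H for all n }, that is, every element of Ĝ whose first coordinate lies in H differs by an element of ker ρ from an element all of whose coordinates lie in H. -/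
/-- A divisibility chain in `H` starting at a given element. -/
lemma exists_chain {G : Type*} [AddCommGroup G] (H : AddSubgroup G)
    (hHdiv : ∀ h ∈ H, ∀ n : ℕ, 0 < n → ∃ h' ∈ H, n • h' = h)
    (g : G) (hg : g ∈ H) :
    ∃ c : ℕ → G, c 0 = g ∧ (∀ k, c k ∈ H) ∧ ∀ k, (k + 1) • c (k + 1) = c k := by
  choose! f hf1 hf2 using hHdiv
  refine ⟨fun k => Nat.rec g (fun k ck => f ck (k + 1)) k, rfl, ?_, ?_⟩
  · intro k
    induction k with
    | zero => exact hg
    | succ k ih => exact hf1 _ ih (k + 1) (Nat.succ_pos k)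
  · intro k
    have hmem : (Nat.rec g (fun k ck => f ck (k + 1)) k : G) ∈ H := by
      clear hf2
      induction k with
      | zero => exact hg
      | succ k ih => exact hf1 _ ih (k + 1) (Nat.succ_pos k)
    exact hf2 _ hmem (k + 1) (Nat.succ_pos k)

/-- For a divisible subgroup `H ≤ G`, `ρ⁻¹(H) = Ĥ' + ker ρ` in `Ĝ`: an element of `Ĝ`
has first coordinate in `H` iff it is the sum of an element with all coordinates in `H`
and an element of `ker ρ`. -/
theorem stmt17 {G : Type*} [AddCommGroup G] (H : AddSubgroup G)
    (hHdiv : ∀ h ∈ H, ∀ n : ℕ, 0 < n → ∃ h' ∈ H, n • h' = h) :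
    ∀ x ∈ Coherent G, (x 1 ∈ H ↔
      ∃ y ∈ Coherent G, ∃ z ∈ Coherent G,
        (∀ n : ℕ+, y n ∈ H) ∧ z 1 = 0 ∧ x = y + z) := by
  intro x hx
  constructor
  · intro hx1
    obtain ⟨c, hc0, hcH, hcrec⟩ := exists_chain H hHdiv (x 1) hx1
    -- key: (K!/k!) • c K = c k for k ≤ K
    have key : ∀ j k : ℕ, ((k + j).factorial / k.factorial) • c (k + j) = c k := by
      intro j
      induction j with
      | zero => intro k; simp [Nat.div_self (Nat.factorial_pos k)]
      | succ j ih =>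
        intro k
        have hdvd : k.factorial ∣ (k + j).factorial :=
          Nat.factorial_dvd_factorial (Nat.le_add_right k j)
        have h1 : (k + (j + 1)).factorial = (k + j + 1) * (k + j).factorial := by
          rw [show k + (j + 1) = (k + j) + 1 from rfl, Nat.factorial_succ]
        rw [h1, Nat.mul_div_assoc _ hdvd, mul_comm, mul_smul,
          show k + (j + 1) = (k + j) + 1 from rfl, hcrec (k + j)]
        exact ih k
    have key' : ∀ k K : ℕ, k ≤ K → (K.factorial / k.factorial) • c K = c k := by
      intro k K hkK
      obtain ⟨j, rfl⟩ := Nat.exists_eq_add_of_le hkK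
      exact key j k
    set y : ℕ+ → G := fun n => ((n : ℕ).factorial / (n : ℕ)) • c (n : ℕ) with hy
    have hyCoh : y ∈ Coherent G := by
      intro n m
      have hnm : ((n * m : ℕ+) : ℕ) = (n : ℕ) * (m : ℕ) := by push_cast; ring
      simp only [hy, hnm]
      rw [smul_smul]
      set np := (n : ℕ); set mp := (m : ℕ)
      have hn : 0 < np := n.pos
      have hm : 0 < mp := m.pos
      set A := (np * mp).factorial with hA
      have hd2 : np.factorial ∣ A :=
        Nat.factorial_dvd_factorial (Nat.le_mul_of_pos_right np hm)
      have hdA : np ∣ A := dvd_trans (Dvd.intro mp rfl) (Nat.dvd_factorial (by positivity) le_rfl)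
      have hle : np ≤ np * mp := Nat.le_mul_of_pos_right np hm
      rw [← key' np (np * mp) hle, smul_smul]
      congr 1
      -- mp * (A / (np * mp)) = np! / np * (A / np!)
      have hmdvd : mp ∣ A / np := (Nat.dvd_div_iff_mul_dvd hdA).mpr
        (Nat.dvd_factorial (by positivity) le_rfl)
      rw [Nat.div_mul_div_comm (Nat.dvd_factorial hn le_rfl) hd2,
        mul_comm np np.factorial,
        Nat.mul_div_mul_left A np (Nat.factorial_pos np),
        ← Nat.div_div_eq_div_mul, Nat.mul_div_cancel' hmdvd]
    have hy1 : y 1 = x 1 := by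
      have h1 : 1 • c 1 = c 0 := hcrec 0
      simp only [hy, PNat.one_coe, Nat.factorial_one, Nat.div_self Nat.one_pos, one_smul]
      rw [← hc0, ← h1, one_smul]
    refine ⟨y, hyCoh, x - y, sub_mem hx hyCoh, ?_, ?_, by abel⟩
    · intro n
      exact AddSubgroup.nsmul_mem H (hcH (n : ℕ)) _
    · simp [hy1]
  · rintro ⟨y, hy, z, hz, hyH, hz1, rfl⟩
    simpa [hz1] using hyH 1
end

section
/- Let G be a divisible abelian group with finite n-torsion for each n, and let f : G → H be a surjective homomorphism of divisible abelian groups whose kernel K is divisible. Then the induced map f̂ : Ĝ → Ĥ between inverse limits along multiplication maps restricts to a surjection ker ρ_G → ker ρ_H of the kernels of the first projections; that is, every coherent torsion-compatible sequence in H lifts to one in G. -/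
/-!
Fix a coherent torsion family `t` in `H`. The elements `g` with `n • g = 0` and `f g = t n` form
a finite set (by the torsion hypothesis on `G`) which is nonempty: if `f g₀ = t n`, then
`n • g₀` lies in the kernel, and subtracting an `n`-th root of it inside the kernel gives such a
`g`. Multiplication by `m` maps these lifts at level `n * m` to lifts at level `n`, so they form
an inverse system of finite nonempty sets over `ℕ+` ordered by divisibility, and Kőnig's lemma
provides a coherent choice of lifts.
-/

open CategoryTheory

def PNatDvd : Type := ℕ+

namespace PNatDvd

def ofPNat : ℕ+ → PNatDvd := id

def toPNat : PNatDvd → ℕ+ := id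

instance : Preorder PNatDvd where
  le a b := a.toPNat ∣ b.toPNat
  le_refl a := dvd_refl a.toPNat
  le_trans _ _ _ := dvd_trans

instance : IsDirectedOrder PNatDvd where
  directed a b := ⟨ofPNat (a.toPNat * b.toPNat), dvd_mul_right _ _, dvd_mul_left _ _⟩

end PNatDvd

theorem Nat.div_mul_div_of_dvd_of_dvd {a b c : ℕ} (hab : a ∣ b) (hbc : b ∣ c) :
    b / a * (c / b) = c / a := by
  obtain ⟨x, rfl⟩ := hab
  obtain ⟨y, rfl⟩ := hbc
  rcases Nat.eq_zero_or_pos (a * x) with h | h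
  · simp [h]
  · have ha : 0 < a := Nat.pos_of_mul_pos_right h
    rw [Nat.mul_div_cancel_left x ha, Nat.mul_div_cancel_left y h, mul_assoc,
      Nat.mul_div_cancel_left _ ha]

theorem Coherent.nsmul_apply_self {G : Type*} [AddCommGroup G] {t : ℕ+ → G}
    (ht : t ∈ Coherent G) (n : ℕ+) : (n : ℕ) • t n = t 1 := by
  simpa using ht 1 n

theorem Coherent.exists_mem_forall_mem {G : Type*} [AddCommGroup G] (S : ℕ+ → Set G)
    (hfin : ∀ n, (S n).Finite) (hne : ∀ n, (S n).Nonempty)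
    (hmaps : ∀ n m : ℕ+, ∀ x ∈ S (n * m), (m : ℕ) • x ∈ S n) :
    ∃ s ∈ Coherent G, ∀ n, s n ∈ S n := by
  have hmaps_of_dvd : ∀ {a b : ℕ+}, a ∣ b → ∀ x ∈ S b, ((b : ℕ) / a) • x ∈ S a := by
    rintro a _ ⟨m, rfl⟩ x hx
    simpa [Nat.mul_div_cancel_left _ a.pos] using hmaps a m x hx
  let F : PNatDvdᵒᵖ ⥤ Type _ :=
    { obj j := S j.unop.toPNat
      map {j j'} ψ := TypeCat.ofHom fun x => ⟨_, hmaps_of_dvd ψ.unop.le x.1 x.2⟩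
      map_id j := by
        ext x
        exact congrArg (· • x.1) (Nat.div_self j.unop.toPNat.pos) |>.trans (one_smul _ _)
      map_comp {j j' j''} ψ φ := by
        ext x
        change ((j.unop.toPNat : ℕ) / j''.unop.toPNat) • x.1 =
          ((j'.unop.toPNat : ℕ) / j''.unop.toPNat) • (((j.unop.toPNat : ℕ) / j'.unop.toPNat) • x.1)
        rw [← mul_smul, Nat.div_mul_div_of_dvd_of_dvd (PNat.dvd_iff.mp φ.unop.le)
          (PNat.dvd_iff.mp ψ.unop.le)] }
  have : ∀ j, Finite (F.obj j) := fun j => (hfin j.unop.toPNat).to_subtype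
  have : ∀ j, Nonempty (F.obj j) := fun j => (hne j.unop.toPNat).to_subtype
  obtain ⟨u, hu⟩ := nonempty_sections_of_finite_inverse_system F
  refine ⟨fun n => (u (.op (PNatDvd.ofPNat n))).1, fun n m => ?_, fun n => (u _).2⟩
  have hle : PNatDvd.ofPNat n ≤ PNatDvd.ofPNat (n * m) := dvd_mul_right n m
  dsimp only
  rw [← congrArg Subtype.val (hu (homOfLE hle).op)]
  change _ = (((n * m : ℕ+) : ℕ) / n) • _
  rw [PNat.mul_coe, Nat.mul_div_cancel_left _ n.pos]

theorem AddMonoidHom.exists_nsmul_eq_zero_and_apply_eq {G H : Type*} [AddCommGroup G]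
    [AddCommGroup H] {f : G →+ H} (hsurj : Function.Surjective f)
    (hkerdiv : ∀ k ∈ f.ker, ∀ n : ℕ, 0 < n → ∃ k' ∈ f.ker, n • k' = k)
    {n : ℕ} (hn : 0 < n) {h : H} (hh : n • h = 0) : ∃ g, n • g = 0 ∧ f g = h := by
  obtain ⟨g₀, rfl⟩ := hsurj h
  obtain ⟨k, hk, hnk⟩ := hkerdiv (n • g₀) (by rw [mem_ker, map_nsmul, hh]) n hn
  exact ⟨g₀ - k, by rw [smul_sub, hnk, sub_self], by rw [map_sub, mem_ker.mp hk, sub_zero]⟩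

theorem stmt18_general {G H : Type*} [AddCommGroup G] [AddCommGroup H]
    (hGfin : ∀ n : ℕ, 0 < n → Finite {g : G // n • g = 0})
    (f : G →+ H) (hsurj : Function.Surjective f)
    (hkerdiv : ∀ k ∈ f.ker, ∀ n : ℕ, 0 < n → ∃ k' ∈ f.ker, n • k' = k) :
    ∀ t ∈ Coherent H, t 1 = 0 →
      ∃ s ∈ Coherent G, s 1 = 0 ∧ ∀ n : ℕ+, f (s n) = t n := by
  intro t ht ht1
  let S (n : ℕ+) : Set G := {g | (n : ℕ) • g = 0 ∧ f g = t n}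
  have hfin (n : ℕ+) : (S n).Finite :=
    (Set.finite_coe_iff.mp (hGfin n n.pos)).subset fun _ hg => hg.1
  have hne (n : ℕ+) : (S n).Nonempty :=
    f.exists_nsmul_eq_zero_and_apply_eq hsurj hkerdiv n.pos
      ((Coherent.nsmul_apply_self ht n).trans ht1)
  have hmaps (n m : ℕ+) : ∀ x ∈ S (n * m), (m : ℕ) • x ∈ S n := by
    rintro x ⟨hx, hfx⟩
    exact ⟨by rw [smul_smul, ← PNat.mul_coe, hx], by rw [map_nsmul, hfx, ht n m]⟩
  obtain ⟨s, hs, hsS⟩ := Coherent.exists_mem_forall_mem S hfin hne hmaps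
  exact ⟨s, hs, by simpa using (hsS 1).1, fun n => (hsS n).2⟩

/-- If `f : G → H` is a surjection of divisible abelian groups with divisible kernel and
`G` has finite `n`-torsion for all `n`, then the induced map `Ĝ → Ĥ` restricts to a
surjection `ker ρ_G → ker ρ_H`. -/
theorem stmt18 {G H : Type*} [AddCommGroup G] [AddCommGroup H]
    (hGdiv : ∀ g : G, ∀ n : ℕ, 0 < n → ∃ g' : G, n • g' = g)
    (hHdiv : ∀ h : H, ∀ n : ℕ, 0 < n → ∃ h' : H, n • h' = h)
    (hGfin : ∀ n : ℕ, 0 < n → Finite {g : G // n • g = 0})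
    (f : G →+ H) (hsurj : Function.Surjective f)
    (hkerdiv : ∀ k ∈ f.ker, ∀ n : ℕ, 0 < n → ∃ k' ∈ f.ker, n • k' = k) :
    ∀ t ∈ Coherent H, t 1 = 0 →
      ∃ s ∈ Coherent G, s 1 = 0 ∧ ∀ n : ℕ+, f (s n) = t n :=
  stmt18_general hGfin f hsurj hkerdiv
end
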